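/- arXiv:2306.17655 — 6 statements merged into one kernel-verified Lean document; each statement's English description precedes it below -/
import Mathlib

section
/- Let Z : G × G → A_X be a cotranslation and γ : G → A_X a group morphism such that γ(k) ∘ Z(g, h) = Z(g, h) ∘ γ(k) for all g, h, k ∈ G. Then W : G × G → A_X defined by W(g, h) = Z(g, h) ∘ γ(h) is a cotranslation. -/
def IsCotranslation {G M : Type*} [Mul G] [Mul M] (Z : G → G → M) : Prop :=
  ∀ g h k : G, Z g (k * h) = Z (h * g) k * Z g h

theorem IsCotranslation.mul_map {G M : Type*} [MulOneClass G] [Monoid M] {Z : G → G → M}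
    (hZ : IsCotranslation Z) (γ : G →* M) (hcomm : ∀ g h k : G, Commute (γ k) (Z g h)) :
    IsCotranslation fun g h => Z g h * γ h := by
  intro g h k
  calc Z g (k * h) * γ (k * h) = Z (h * g) k * (Z g h * γ k) * γ h := by
        rw [hZ, map_mul]; simp only [mul_assoc]
    _ = Z (h * g) k * γ k * (Z g h * γ h) := by
        rw [← (hcomm g h k).eq]; simp only [mul_assoc]

/-- If `Z` is a cotranslation and `γ` a group morphism commuting with all `Z(g,h)`,
then `W(g,h) = Z(g,h) ∘ γ(h)` is a cotranslation. -/
theorem cotranslation_mul_commuting_hom {G X : Type*} [Group G]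
    (Z : G → G → Equiv.Perm X)
    (hZ : ∀ g h k : G, Z g (k * h) = Z (h * g) k * Z g h)
    (γ : G →* Equiv.Perm X)
    (hcomm : ∀ g h k : G, γ k * Z g h = Z g h * γ k) :
    ∀ g h k : G, (fun g h => Z g h * γ h) g (k * h)
      = (fun g h => Z g h * γ h) (h * g) k * (fun g h => Z g h * γ h) g h :=
  IsCotranslation.mul_map hZ γ hcomm
end

section
/- Let Z : 𝕂 × 𝕂 → A_X be a cotranslation such that for every t ∈ 𝕂 the map r ↦ Z(r, t) is differentiable at r = 0. Then for every t ∈ 𝕂 the map r ↦ Z(r, t) is differentiable at every r, and ∂₁Z(r, t) = (∂₁Z(0, t+r)) Z(r, −r) − Z(r, t) (∂₁Z(0, r)) Z(r, −r). -/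
lemma ring_inverse_eq_of {R : Type*} [Ring R] {a b : R} (h1 : a * b = 1) (h2 : b * a = 1) :
    Ring.inverse a = b :=
  Ring.inverse_unit ⟨a, b, h1, h2⟩

/-- If `Z` is a cotranslation such that for every `t` the map `r ↦ Z(r,t)` is
differentiable at `r = 0`, then it is differentiable at every `r` and
`∂₁Z(r,t) = ∂₁Z(0,t+r) Z(r,−r) − Z(r,t) ∂₁Z(0,r) Z(r,−r)`. -/
theorem cotranslation_deriv_fst_everywhere {𝕜 X : Type*} [RCLike 𝕜]
    [NormedAddCommGroup X] [NormedSpace 𝕜 X] [CompleteSpace X]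
    (Z Zinv : 𝕜 → 𝕜 → (X →L[𝕜] X))
    (hZ : ∀ r s t : 𝕜, Z r (t + s) = Z (s + r) t ∘L Z r s)
    (hinv : ∀ r t : 𝕜, Z r t ∘L Zinv r t = 1 ∧ Zinv r t ∘L Z r t = 1)
    (hd : ∀ t : 𝕜, DifferentiableAt 𝕜 (fun r => Z r t) 0) :
    ∀ t r : 𝕜, DifferentiableAt 𝕜 (fun r' => Z r' t) r ∧
      deriv (fun r' => Z r' t) r =
        deriv (fun r' => Z r' (t + r)) 0 ∘L Z r (-r)
          - Z r t ∘L deriv (fun r' => Z r' r) 0 ∘L Z r (-r) := by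
  intro t r
  have hRinv : ∀ r' t' : 𝕜, Ring.inverse (Z r' t') = Zinv r' t' := fun r' t' =>
    ring_inverse_eq_of (hinv r' t').1 (hinv r' t').2
  -- Z r' 0 = 1
  have hZ0 : ∀ r' : 𝕜, Z r' 0 = 1 := by
    intro r'
    have h := hZ r' 0 0
    simp only [add_zero, zero_add] at h
    have := congrArg (fun A => Zinv r' 0 ∘L A) h
    simpa [← ContinuousLinearMap.comp_assoc, (hinv r' 0).2, ContinuousLinearMap.one_def] using this.symm
  -- Z 0 r * Z r (-r) = 1
  have key1 : Z 0 r * Z r (-r) = 1 := by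
    have h := hZ r (-r) r
    simp only [add_neg_cancel, neg_add_cancel, hZ0] at h
    exact h.symm
  -- Z r (-r) * Z 0 r = 1
  have key2 : Z r (-r) * Z 0 r = 1 := by
    have h := hZ 0 r (-r)
    simp only [neg_add_cancel, add_zero, hZ0] at h
    exact h.symm
  have hinvZ0r : Ring.inverse (Z 0 r) = Z r (-r) := ring_inverse_eq_of key1 key2
  -- Z 0 (t+r) * Z r (-r) = Z r t
  have key3 : Z 0 (t + r) * Z r (-r) = Z r t := by
    have h := hZ r (-r) (t + r)
    simp only [add_neg_cancel, neg_add_cancel, add_neg_cancel_right] at h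
    exact h.symm
  -- the key identity: Z (r + h) t = Z h (t + r) * Ring.inverse (Z h r)
  have keyf : ∀ h : 𝕜, Z h (t + r) * Ring.inverse (Z h r) = Z (r + h) t := by
    intro h
    rw [hRinv, hZ h r t]
    show Z (r + h) t * Z h r * Zinv h r = Z (r + h) t
    rw [mul_assoc]
    show Z (r + h) t * (Z h r ∘L Zinv h r) = _
    rw [(hinv h r).1, mul_one]
  set D₁ := deriv (fun r' => Z r' (t + r)) 0 with hD₁
  set D₂ := deriv (fun r' => Z r' r) 0 with hD₂
  have h1 : HasDerivAt (fun r' => Z r' (t + r)) D₁ 0 := (hd (t + r)).hasDerivAt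
  have h2 : HasDerivAt (fun r' => Z r' r) D₂ 0 := (hd r).hasDerivAt
  -- derivative of the inverse part
  have hinvd : HasDerivAt (fun h => Ring.inverse (Z h r))
      (-(Z r (-r) * D₂ * Z r (-r))) 0 := by
    have hF := hasFDerivAt_ringInverse (𝕜 := 𝕜)
      (⟨Z 0 r, Z r (-r), key1, key2⟩ : (X →L[𝕜] X)ˣ)
    have h := hF.comp_hasDerivAt 0 h2
    convert h using 1
    all_goals rfl
  have hf : HasDerivAt (fun h => Z h (t + r) * Ring.inverse (Z h r))
      (D₁ * Ring.inverse (Z 0 r) + Z 0 (t + r) * -(Z r (-r) * D₂ * Z r (-r))) 0 :=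
    h1.mul hinvd
  rw [hinvZ0r] at hf
  -- transport to r
  have hg : HasDerivAt (fun r' => Z r' t)
      (D₁ * Z r (-r) + Z 0 (t + r) * -(Z r (-r) * D₂ * Z r (-r))) r := by
    have hsub : HasDerivAt (fun r' : 𝕜 => r' - r) 1 r := by
      simpa using (hasDerivAt_id r).sub_const r
    have h := hf.scomp_of_eq r hsub (sub_self r).symm
    simp only [one_smul] at h
    convert h using 1
    all_goals try rfl
    funext r'
    simp [Function.comp, keyf (r' - r)]
  refine ⟨hg.differentiableAt, ?_⟩
  rw [hg.deriv]
  have hkey : Z 0 (t + r) * -(Z r (-r) * D₂ * Z r (-r))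
      = -(Z r t * D₂ * Z r (-r)) := by
    rw [← key3]; noncomm_ring
  rw [hkey]
  show D₁ * Z r (-r) + -(Z r t * D₂ * Z r (-r))
      = D₁ * Z r (-r) - Z r t * (D₂ * Z r (-r))
  noncomm_ring
end

section
/- Let Z : 𝕂 × 𝕂 → A_X be a cotranslation such that for every r ∈ 𝕂 the map t ↦ Z(r, t) is differentiable at t = 0. Then for every r ∈ 𝕂, the map t ↦ Z(r, t) is differentiable at every t and ∂₂Z(r, t) = (∂₂Z(r+t, 0)) ∘ Z(r, t). -/
/-- If `Z` is a cotranslation such that for every `r` the map `t ↦ Z(r,t)` is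
differentiable at `t = 0`, then it is differentiable at every `t` and
`∂₂Z(r,t) = ∂₂Z(r+t,0) ∘ Z(r,t)`. -/
theorem cotranslation_deriv_snd_everywhere {𝕜 X : Type*} [RCLike 𝕜]
    [NormedAddCommGroup X] [NormedSpace 𝕜 X] [CompleteSpace X]
    (Z Zinv : 𝕜 → 𝕜 → (X →L[𝕜] X))
    (hZ : ∀ r s t : 𝕜, Z r (t + s) = Z (s + r) t ∘L Z r s)
    (hinv : ∀ r t : 𝕜, Z r t ∘L Zinv r t = 1 ∧ Zinv r t ∘L Z r t = 1)
    (hd : ∀ r : 𝕜, DifferentiableAt 𝕜 (fun t => Z r t) 0) :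
    ∀ r t : 𝕜, DifferentiableAt 𝕜 (fun s => Z r s) t ∧
      deriv (fun s => Z r s) t = deriv (fun s => Z (r + t) s) 0 ∘L Z r t := by
  intro r t
  -- right multiplication by `Z r t` as a continuous linear map
  set L : (X →L[𝕜] X) →L[𝕜] (X →L[𝕜] X) :=
    (ContinuousLinearMap.compL 𝕜 X X X).flip (Z r t) with hL
  have hkey : (fun s => Z r s) = fun s => L (Z (t + r) (s - t)) := by
    funext s
    have := hZ r t (s - t)
    simp only [sub_add_cancel] at this
    simp [hL, this]
  have hg : HasDerivAt (fun h : 𝕜 => Z (t + r) h) (deriv (fun h => Z (t + r) h) 0) 0 :=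
    (hd (t + r)).hasDerivAt
  have hshift : HasDerivAt (fun s : 𝕜 => Z (t + r) (s - t))
      (deriv (fun h => Z (t + r) h) 0) t := by
    have h1 : HasDerivAt (fun s : 𝕜 => s - t) 1 t := (hasDerivAt_id t).sub_const t
    simpa [Function.comp_def] using HasDerivAt.scomp_of_eq t hg h1 (sub_self t).symm
  have hfull : HasDerivAt (fun s => Z r s) (L (deriv (fun h => Z (t + r) h) 0)) t := by
    rw [hkey]
    exact L.hasFDerivAt.comp_hasDerivAt t hshift
  have hcomm : (t + r) = (r + t) := add_comm t r
  constructor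
  · exact hfull.differentiableAt
  · rw [hfull.deriv]
    simp [hL, hcomm]
end

section
/- Let Z : 𝕂 × 𝕂 → A_X be a cotranslation such that for every r ∈ 𝕂 the map t ↦ Z(r, t) is differentiable. Then for every t ∈ 𝕂 the map r ↦ Z(r, t) is differentiable and ∂₁Z(r, t) = ∂₂Z(r, t) − Z(r, t) ∘ (∂₂Z(r, 0)). -/
/-- If `Z` is a cotranslation such that for every `r` the map `t ↦ Z(r,t)` is
differentiable, then `r ↦ Z(r,t)` is differentiable for every `t` and
`∂₁Z(r,t) = ∂₂Z(r,t) − Z(r,t) ∘ ∂₂Z(r,0)`. -/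
theorem cotranslation_deriv_fst_of_deriv_snd {𝕜 X : Type*} [RCLike 𝕜]
    [NormedAddCommGroup X] [NormedSpace 𝕜 X] [CompleteSpace X]
    (Z Zinv : 𝕜 → 𝕜 → (X →L[𝕜] X))
    (hZ : ∀ r s t : 𝕜, Z r (t + s) = Z (s + r) t ∘L Z r s)
    (hinv : ∀ r t : 𝕜, Z r t ∘L Zinv r t = 1 ∧ Zinv r t ∘L Z r t = 1)
    (hd : ∀ r : 𝕜, Differentiable 𝕜 (fun t => Z r t)) :
    ∀ t r : 𝕜, DifferentiableAt 𝕜 (fun r' => Z r' t) r ∧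
      deriv (fun r' => Z r' t) r =
        deriv (fun s => Z r s) t - Z r t ∘L deriv (fun s => Z r s) 0 := by
  intro t r
  -- units
  have unit : ∀ s : 𝕜, IsUnit (Z r s) := fun s =>
    ⟨⟨Z r s, Zinv r s, (hinv r s).1, (hinv r s).2⟩, rfl⟩
  have hZ0 : Z r 0 = 1 := by
    have h : Z r 0 = Z r 0 * Z r 0 := by
      have h := hZ r 0 0
      simp only [add_zero, zero_add] at h
      exact h
    have h1 := congrArg (fun A => A * Ring.inverse (Z r 0)) h
    simp only [Ring.mul_inverse_cancel _ (unit 0), mul_assoc, mul_one] at h1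
    exact h1.symm
  -- key identity
  have key : ∀ r' : 𝕜, Z r' t = Z r (t + (r' - r)) * Ring.inverse (Z r (r' - r)) := by
    intro r'
    have h := hZ r (r' - r) t
    rw [sub_add_cancel] at h
    rw [h]
    rw [ContinuousLinearMap.mul_def, ContinuousLinearMap.comp_assoc,
      ← ContinuousLinearMap.mul_def (Z r (r' - r)),
      Ring.mul_inverse_cancel _ (unit (r' - r))]
    rfl
  -- inner maps derivatives
  have hf1 : HasDerivAt (fun r' : 𝕜 => t + (r' - r)) 1 r :=
    ((hasDerivAt_id r).sub_const r).const_add t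
  have hf2 : HasDerivAt (fun r' : 𝕜 => r' - r) 1 r :=
    (hasDerivAt_id r).sub_const r
  have hZr : ∀ s : 𝕜, HasDerivAt (fun s' => Z r s') (deriv (fun s' => Z r s') s) s :=
    fun s => (hd r s).hasDerivAt
  have hA : HasDerivAt (fun r' : 𝕜 => Z r (t + (r' - r)))
      (deriv (fun s => Z r s) t) r := by
    have h : HasDerivAt ((fun s => Z r s) ∘ (fun r' : 𝕜 => t + (r' - r)))
        ((1 : 𝕜) • deriv (fun s => Z r s) (t + (r - r))) r :=
      HasDerivAt.scomp (h := fun r' : 𝕜 => t + (r' - r)) r (hZr (t + (r - r))) hf1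
    simpa [Function.comp_def, sub_self] using h
  have hg : HasDerivAt (fun r' : 𝕜 => Z r (r' - r)) (deriv (fun s => Z r s) 0) r := by
    have h : HasDerivAt ((fun s => Z r s) ∘ (fun r' : 𝕜 => r' - r))
        ((1 : 𝕜) • deriv (fun s => Z r s) (r - r)) r :=
      HasDerivAt.scomp (h := fun r' : 𝕜 => r' - r) r (hZr (r - r)) hf2
    simpa [Function.comp_def, sub_self] using h
  -- inverse derivative
  set u : (X →L[𝕜] X)ˣ := ⟨Z r (r - r), Zinv r (r - r), (hinv r (r - r)).1, (hinv r (r - r)).2⟩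
  have hu : (u : X →L[𝕜] X) = 1 := by simpa [u, sub_self] using hZ0
  have huinv : ((u⁻¹ : (X →L[𝕜] X)ˣ) : X →L[𝕜] X) = 1 := by
    have := u.inv_mul
    rw [show (u : X →L[𝕜] X) = 1 from hu] at this
    simpa using this
  have hinvZ : HasFDerivAt Ring.inverse
      (-((ContinuousLinearMap.mulLeftRight 𝕜 (X →L[𝕜] X)) ↑u⁻¹ ↑u⁻¹)) (Z r (r - r)) :=
    hasFDerivAt_ringInverse u
  have hB : HasDerivAt (fun r' : 𝕜 => Ring.inverse (Z r (r' - r)))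
      (-(deriv (fun s => Z r s) 0)) r := by
    have := hinvZ.comp_hasDerivAt r hg
    simpa [huinv, Function.comp_def] using this
  have hAB := hA.mul hB
  have hfun : (fun r' : 𝕜 => Z r' t)
      = fun r' : 𝕜 => Z r (t + (r' - r)) * Ring.inverse (Z r (r' - r)) := funext key
  rw [hfun]
  refine ⟨hAB.differentiableAt, ?_⟩
  rw [show (fun r' : 𝕜 => Z r (t + (r' - r)) * Ring.inverse (Z r (r' - r))) = (fun r' : 𝕜 => Z r (t + (r' - r))) * (fun r' : 𝕜 => Ring.inverse (Z r (r' - r))) from rfl, hAB.deriv]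
  have h0 : Z r (r - r) = 1 := by simpa [sub_self] using hZ0
  simp [sub_self, h0, hZ0, ContinuousLinearMap.mul_def, sub_eq_add_neg]
end

section
/- If W : G × G → B_X is a partial cotranslation, then for all g, h, k ∈ G, ker W(h, g) = ker W(h, k); that is, the kernel of W(h, ·) does not depend on the second argument. -/
/-- For a partial cotranslation `W`, the kernel of `W(h, ·)` does not depend on the
second argument: `ker W(h,g) = ker W(h,k)`. -/
theorem partial_cotranslation_ker_eq {𝕜 : Type*} [NontriviallyNormedField 𝕜]
    {G X : Type*} [Group G] [NormedAddCommGroup X] [NormedSpace 𝕜 X] [CompleteSpace X]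
    (W : G → G → (X →L[𝕜] X))
    (hW : ∀ g h k : G, W g (k * h) = W (h * g) k ∘L W g h) :
    ∀ g h k : G, LinearMap.ker (W h g : X →ₗ[𝕜] X) = LinearMap.ker (W h k : X →ₗ[𝕜] X) := by
  have key : ∀ g h k : G, LinearMap.ker (W h g : X →ₗ[𝕜] X) ≤ LinearMap.ker (W h k : X →ₗ[𝕜] X) := by
    intro g h k x hx
    have h1 : W h k = W (g * h) (k * g⁻¹) ∘L W h g := by
      have := hW h g (k * g⁻¹)
      simpa [mul_assoc] using this
    simp only [LinearMap.mem_ker, ContinuousLinearMap.coe_coe] at hx ⊢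
    rw [h1]
    simp [hx]
  intro g h k
  exact le_antisymm (key g h k) (key k h g)
end

section
/- Let W : G × G → M_d(𝕂) be a partial cotranslation with values in d × d matrices over a field 𝕂 (equivalently, endomorphisms of a finite-dimensional vector space). Then rank W(g, h) = rank W(k, ℓ) for all g, h, k, ℓ ∈ G. -/
/-!
Both factors of `W(g, kh) = W(hg, k) W(g, h)` bound the rank of the product. The right factor shows
that `rank W(g, ·)` is constant; since `h` and `k` can be chosen so that `hg` and `k` are arbitrary,
the left factor then shows that `rank W(g, x) ≤ rank W(g', k)` for all `g, g', x, k`.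
-/

def IsPartialCotranslation {G M : Type*} [Mul G] [Mul M] (W : G → G → M) : Prop :=
  ∀ g h k : G, W g (k * h) = W (h * g) k * W g h

namespace IsPartialCotranslation

variable {G R n : Type*} [Group G] [CommRing R] [StrongRankCondition R] [Fintype n]
  {W : G → G → Matrix n n R}

theorem rank_le_rank_same_left (hW : IsPartialCotranslation W) (g x h : G) :
    (W g x).rank ≤ (W g h).rank := by
  have e := hW g h (x * h⁻¹)
  rw [inv_mul_cancel_right] at e
  exact e ▸ Matrix.rank_mul_le_right _ _

theorem rank_le_rank (hW : IsPartialCotranslation W) (g h k ℓ : G) :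
    (W g h).rank ≤ (W k ℓ).rank :=
  calc (W g h).rank ≤ (W g (ℓ * (k * g⁻¹))).rank := hW.rank_le_rank_same_left g h _
    _ ≤ (W k ℓ).rank := by
      rw [hW g (k * g⁻¹) ℓ, inv_mul_cancel_right]
      exact Matrix.rank_mul_le_left _ _

theorem rank_eq_rank (hW : IsPartialCotranslation W) (g h k ℓ : G) :
    (W g h).rank = (W k ℓ).rank :=
  le_antisymm (hW.rank_le_rank g h k ℓ) (hW.rank_le_rank k ℓ g h)

end IsPartialCotranslation

/-- For a matrix-valued partial cotranslation `W : G × G → M_d(𝕂)`, the rank of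
`W(g,h)` is independent of both arguments. -/
theorem partial_cotranslation_rank_const {𝕂 : Type*} [Field 𝕂]
    {G : Type*} [Group G] {d : ℕ}
    (W : G → G → Matrix (Fin d) (Fin d) 𝕂)
    (hW : ∀ g h k : G, W g (k * h) = W (h * g) k * W g h) :
    ∀ g h k ℓ : G, (W g h).rank = (W k ℓ).rank :=
  IsPartialCotranslation.rank_eq_rank hW
end
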